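/- There is an equivalence of categories Φ₁ between the wide subcategory of the Borisov–Manin category whose morphisms are the graftings, and the category of Joyal–Kock graphs without isolated edges with reduced covers (etale morphisms bijective on vertices) as morphisms. On objects, a BM graph (V, F, ∂, j) is sent to the JK graph with vertex set V, half-edge set H = F, arc set A = F + T (T the set of tails), s the inclusion, p = ∂, and involution i given by j on non-fixed flags and interchanging each tail with its copy in T. -/

import Mathlib

/-- A Borisov–Manin graph: a quadruple `(V, F, ∂, j)` of finite sets with
`∂ : F → V` and `j : F → F` an involution.  Fixpoints of `j` are *tails*;
2-element orbits of `j` are *edges*. -/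
structure BMGraph where
  V : Type
  F : Type
  fintV : Fintype V
  fintF : Fintype F
  decF : DecidableEq F
  bd : F → V
  j : F → F
  j_invol : ∀ f, j (j f) = f

attribute [instance] BMGraph.fintV BMGraph.fintF BMGraph.decF

/-- A Borisov–Manin morphism `τ → σ`: a triple `(h^F, h_V, j_h)` satisfying the
Borisov–Manin axioms.  The involution `j_h` is recorded as a total map on `F_τ`,
normalised to be the identity on the image of the flag map, and a fixpoint-free
involution on the complement, agreeing with `j_τ` on edges. -/
structure BMHom (τ σ : BMGraph) where
  flagMap : σ.F → τ.F
  vertexMap : τ.V → σ.V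
  jh : τ.F → τ.F
  flag_inj : Function.Injective flagMap
  vertex_surj : Function.Surjective vertexMap
  range_j_closed : ∀ f : σ.F, τ.j (flagMap f) ∈ Set.range flagMap
  compl_j_closed : ∀ g : τ.F, g ∉ Set.range flagMap → τ.j g ∉ Set.range flagMap
  jh_range : ∀ g ∈ Set.range flagMap, jh g = g
  jh_compl : ∀ g, g ∉ Set.range flagMap → jh g ∉ Set.range flagMap
  jh_invol : ∀ g, jh (jh g) = g
  jh_nofix : ∀ g, g ∉ Set.range flagMap → jh g ≠ g
  jh_edge : ∀ g, g ∉ Set.range flagMap → τ.j g ≠ g → jh g = τ.j g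
  bd_comm : ∀ f : σ.F, vertexMap (τ.bd (flagMap f)) = σ.bd f
  contract_bd : ∀ g, g ∉ Set.range flagMap → vertexMap (τ.bd (jh g)) = vertexMap (τ.bd g)
  edges_to_edges : ∀ f f' : σ.F, τ.j (flagMap f) = flagMap f' → flagMap f ≠ flagMap f' → σ.j f = f'

/-- A grafting: both the vertex map and the flag map are bijective. -/
def IsGrafting {τ σ : BMGraph} (h : BMHom τ σ) : Prop :=
  Function.Bijective h.flagMap ∧ Function.Bijective h.vertexMap

/-- A compression: the flag map restricts to a bijection from the tails of the
codomain graph onto the tails of the domain graph. -/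
def IsCompression {τ σ : BMGraph} (h : BMHom τ σ) : Prop :=
  (∀ f : σ.F, σ.j f = f → τ.j (h.flagMap f) = h.flagMap f) ∧
  (∀ g : τ.F, τ.j g = g → ∃ f : σ.F, σ.j f = f ∧ h.flagMap f = g)

/-- A Joyal–Kock graph: a diagram of finite sets `A ←s– H –p→ V` with `s`
injective and a fixpoint-free involution `i` on the set of arcs `A`. -/
structure JKGraph where
  A : Type
  H : Type
  V : Type
  fintA : Fintype A
  fintH : Fintype H
  fintV : Fintype V
  decA : DecidableEq A
  decH : DecidableEq H
  s : H → A
  p : H → V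
  i : A → A
  s_inj : Function.Injective s
  i_invol : ∀ a, i (i a) = a
  i_nofix : ∀ a, i a ≠ a

attribute [instance] JKGraph.fintA JKGraph.fintH JKGraph.fintV JKGraph.decA JKGraph.decH

/-- An etale morphism of JK graphs: a levelwise map commuting with `s`, `p`
and the involutions, such that the square on `H` and `V` is a pullback (each
vertex maps to a vertex of the same valence). -/
structure Etale (G G' : JKGraph) where
  fA : G.A → G'.A
  fH : G.H → G'.H
  fV : G.V → G'.V
  comm_s : ∀ h, fA (G.s h) = G'.s (fH h)
  comm_p : ∀ h, fV (G.p h) = G'.p (fH h)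
  comm_i : ∀ a, fA (G.i a) = G'.i (fA a)
  pullback : ∀ (h' : G'.H) (v : G.V), G'.p h' = fV v → ∃! h : G.H, G.p h = v ∧ fH h = h'

/-- `IsEComp e1 e2 e` expresses that `e` is the (levelwise) composite of the
etale morphisms `e1` followed by `e2`. -/
def IsEComp {G G' G'' : JKGraph} (e1 : Etale G G') (e2 : Etale G' G'') (e : Etale G G'') : Prop :=
  (∀ a, e.fA a = e2.fA (e1.fA a)) ∧ (∀ h, e.fH h = e2.fH (e1.fH h)) ∧
  (∀ v, e.fV v = e2.fV (e1.fV v))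

/-- The ports of a graph: the arcs not in the image of `s`. -/
def JKGraph.ports (G : JKGraph) : Set G.A := {a | a ∉ Set.range G.s}

/-- An edge (i-orbit) is isolated if neither of its arcs lies in the image of
`s`; `NoIsolated` says the graph has no isolated edges. -/
def NoIsolated (G : JKGraph) : Prop :=
  ∀ a : G.A, a ∈ Set.range G.s ∨ G.i a ∈ Set.range G.s

/-- A reduced cover: an etale morphism which is surjective on arcs (hence on
edges) and bijective on vertices. -/
def IsReducedCover {R X : JKGraph} (e : Etale R X) : Prop :=
  Function.Bijective e.fV ∧ Function.Surjective e.fA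

/-- `IsCompositeOf k g c` expresses that `k : τ → ρ` is the Borisov–Manin
composite of `g : τ → σ` followed by `c : σ → ρ`: the flag map is `g^F ∘ c^F`,
the vertex map is `c_V ∘ g_V`, and the involution of `k` is `j_g` on the
complement of `g^F` and `j_c` (transported along `g^F`) on the complement of
`c^F`. -/
def IsCompositeOf {τ σ ρ : BMGraph} (k : BMHom τ ρ) (g : BMHom τ σ) (c : BMHom σ ρ) : Prop :=
  (∀ f, k.flagMap f = g.flagMap (c.flagMap f)) ∧
  (∀ v, k.vertexMap v = c.vertexMap (g.vertexMap v)) ∧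
  (∀ x, x ∉ Set.range g.flagMap → k.jh x = g.jh x) ∧
  (∀ f, f ∉ Set.range c.flagMap → k.jh (g.flagMap f) = g.flagMap (c.jh f))

/-- An isomorphism of BM graphs realised as a morphism: a structure-preserving
bijection. -/
def IsIso {σ σ' : BMGraph} (m : BMHom σ σ') : Prop :=
  Function.Bijective m.flagMap ∧ Function.Bijective m.vertexMap ∧
  (∀ f, σ.j (m.flagMap f) = m.flagMap (σ'.j f))

/-- The JK graph associated to a BM graph `(V, F, ∂, j)`: half-edges are the
flags, arcs are `F + T` (`T` the set of tails), `s` the inclusion, `p = ∂`,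
and the involution is `j` on non-fixed flags while interchanging each tail
with its copy in `T`. -/
def toJK (τ : BMGraph) : JKGraph where
  A := τ.F ⊕ {f : τ.F // τ.j f = f}
  H := τ.F
  V := τ.V
  fintA := inferInstance
  fintH := τ.fintF
  fintV := τ.fintV
  decA := inferInstance
  decH := τ.decF
  s := Sum.inl
  p := τ.bd
  i := fun a =>
    match a with
    | Sum.inl f => if h : τ.j f = f then Sum.inr ⟨f, h⟩ else Sum.inl (τ.j f)
    | Sum.inr t => Sum.inl t.val
  s_inj := fun _ _ h => Sum.inl_injective h
  i_invol := by
    rintro (f | t)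
    · by_cases hf : τ.j f = f
      · simp [hf]
      · simp only [dif_neg hf]
        have : ¬ τ.j (τ.j f) = τ.j f := by
          rw [τ.j_invol]; intro h; exact hf h.symm
        simp only [dif_neg this, τ.j_invol]
        exact dif_neg fun h => hf h.symm
    · simp [t.prop]
  i_nofix := by
    rintro (f | t) h
    · by_cases hf : τ.j f = f
      · simp [hf] at h
      · simp only [dif_neg hf] at h
        exact hf (Sum.inl_injective h)
    · simp at h

/-!
A grafting has bijective flag and vertex maps, so its involution `j_h` is trivial and it
amounts to a bijection of flags `φ : F_τ ≃ F_σ` (the inverse of its flag map) and a bijection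
of vertices, compatible with `∂` and sending each edge of `τ` to an edge of `σ` (tails of `τ`
may be grafted into edges of `σ`).  Every arc of `toJK τ` is `s h` or `i (s h)`, so an etale
map out of `toJK τ` is determined by its maps on half-edges and vertices; by the pullback
condition its half-edge map is bijective once its vertex map is, and commuting with `i` on an
arc `s h` with `j h ≠ h` is exactly compatibility with edges.  So both kinds of morphisms are
the same data, functorially.  A JK graph without isolated edges is `toJK` of the BM graph on
its half-edges, in which `j` pairs the two half-edges of an inner edge and fixes a half-edge
whose opposite arc is a port.
-/

open Function

theorem toJK_i_inl_of_ne {τ : BMGraph} {f : τ.F} (hf : τ.j f ≠ f) :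
    (toJK τ).i (Sum.inl f) = Sum.inl (τ.j f) := by
  simp [toJK, hf]

theorem toJK_i_inl_eq_inl_iff {τ : BMGraph} {f f' : τ.F} :
    (toJK τ).i (Sum.inl f) = Sum.inl f' ↔ τ.j f = f' ∧ f' ≠ f := by
  by_cases hf : τ.j f = f
  · have : (toJK τ).i (Sum.inl f) = Sum.inr ⟨f, hf⟩ := by simp [toJK, hf]
    rw [this]
    exact ⟨fun h => (Sum.inr_ne_inl h).elim, fun h => (h.2 (h.1.symm.trans hf)).elim⟩
  · rw [toJK_i_inl_of_ne hf]
    exact ⟨fun h => ⟨Sum.inl_injective h, Sum.inl_injective h ▸ hf⟩,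
      fun h => congrArg Sum.inl h.1⟩

theorem noIsolated_toJK (τ : BMGraph) : NoIsolated (toJK τ) := by
  rintro (f | t)
  · exact Or.inl ⟨f, rfl⟩
  · exact Or.inr ⟨t.val, rfl⟩

namespace BMHom

variable {τ σ : BMGraph}

theorem ext {g g' : BMHom τ σ} (hF : g.flagMap = g'.flagMap)
    (hV : g.vertexMap = g'.vertexMap) (hj : g.jh = g'.jh) : g = g' := by
  cases g; cases g'; cases hF; cases hV; cases hj; rfl

def ofFlagEquiv (φ : τ.F ≃ σ.F) (ψ : τ.V → σ.V) (hψ : Surjective ψ)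
    (hbd : ∀ x, σ.bd (φ x) = ψ (τ.bd x))
    (hj : ∀ x, τ.j x ≠ x → σ.j (φ x) = φ (τ.j x)) :
    BMHom τ σ where
  flagMap := φ.symm
  vertexMap := ψ
  jh := id
  flag_inj := φ.symm.injective
  vertex_surj := hψ
  range_j_closed f := φ.symm.surjective _
  compl_j_closed g hg := (hg (φ.symm.surjective g)).elim
  jh_range _ _ := rfl
  jh_compl g hg := (hg (φ.symm.surjective g)).elim
  jh_invol _ := rfl
  jh_nofix g hg := (hg (φ.symm.surjective g)).elim
  jh_edge g hg := (hg (φ.symm.surjective g)).elim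
  bd_comm f := by rw [← hbd, φ.apply_symm_apply]
  contract_bd g hg := (hg (φ.symm.surjective g)).elim
  edges_to_edges f f' hjf hne := by
    have := hj (φ.symm f) (hjf ▸ hne.symm)
    rwa [φ.apply_symm_apply, hjf, φ.apply_symm_apply] at this

theorem isGrafting_ofFlagEquiv (φ : τ.F ≃ σ.F) {ψ : τ.V → σ.V} (hψ : Bijective ψ)
    (hbd : ∀ x, σ.bd (φ x) = ψ (τ.bd x))
    (hj : ∀ x, τ.j x ≠ x → σ.j (φ x) = φ (τ.j x)) :
    IsGrafting (ofFlagEquiv φ ψ hψ.2 hbd hj) :=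
  ⟨φ.symm.bijective, hψ⟩

end BMHom

namespace IsGrafting

variable {τ σ : BMGraph} {g : BMHom τ σ}

theorem jh_eq_id (hg : IsGrafting g) : g.jh = id :=
  funext fun x => g.jh_range x (hg.1.2 x)

theorem ext {g' : BMHom τ σ} (hg : IsGrafting g) (hg' : IsGrafting g')
    (hF : g.flagMap = g'.flagMap) (hV : g.vertexMap = g'.vertexMap) : g = g' :=
  BMHom.ext hF hV (hg.jh_eq_id.trans hg'.jh_eq_id.symm)

noncomputable def flagEquiv (hg : IsGrafting g) : τ.F ≃ σ.F :=
  (Equiv.ofBijective g.flagMap hg.1).symm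

theorem flagMap_flagEquiv (hg : IsGrafting g) (x : τ.F) : g.flagMap (hg.flagEquiv x) = x :=
  (Equiv.ofBijective g.flagMap hg.1).apply_symm_apply x

theorem flagEquiv_flagMap (hg : IsGrafting g) (f : σ.F) : hg.flagEquiv (g.flagMap f) = f :=
  (Equiv.ofBijective g.flagMap hg.1).symm_apply_apply f

theorem bd_flagEquiv (hg : IsGrafting g) (x : τ.F) :
    σ.bd (hg.flagEquiv x) = g.vertexMap (τ.bd x) := by
  rw [← g.bd_comm, flagMap_flagEquiv]

theorem j_flagEquiv (hg : IsGrafting g) {x : τ.F} (hx : τ.j x ≠ x) :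
    σ.j (hg.flagEquiv x) = hg.flagEquiv (τ.j x) :=
  g.edges_to_edges _ _ (by rw [flagMap_flagEquiv, flagMap_flagEquiv])
    (by rw [flagMap_flagEquiv, flagMap_flagEquiv]; exact hx.symm)

theorem flagEquiv_comp {ρ : BMGraph} {g' : BMHom σ ρ} {k : BMHom τ ρ} (hg : IsGrafting g)
    (hg' : IsGrafting g') (hk : IsGrafting k)
    (hF : ∀ f, k.flagMap f = g.flagMap (g'.flagMap f)) (x : τ.F) :
    hk.flagEquiv x = hg'.flagEquiv (hg.flagEquiv x) := by
  rw [flagEquiv, Equiv.symm_apply_eq, Equiv.ofBijective_apply, hF, flagMap_flagEquiv,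
    flagMap_flagEquiv]

end IsGrafting

namespace Etale

variable {G G' G'' : JKGraph}

theorem fH_injective (e : Etale G G') (hV : Injective e.fV) : Injective e.fH := by
  intro h₁ h₂ hh
  have hp : G.p h₂ = G.p h₁ := hV (by rw [e.comm_p, e.comm_p, hh])
  obtain ⟨h, -, huniq⟩ := e.pullback (e.fH h₁) (G.p h₁) (e.comm_p h₁).symm
  exact (huniq h₁ ⟨rfl, rfl⟩).trans (huniq h₂ ⟨hp, hh.symm⟩).symm

theorem fH_surjective (e : Etale G G') (hV : Surjective e.fV) : Surjective e.fH := by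
  intro h'
  obtain ⟨v, hv⟩ := hV (G'.p h')
  obtain ⟨h, ⟨-, hh⟩, -⟩ := e.pullback h' v hv.symm
  exact ⟨h, hh⟩

theorem fA_surjective (e : Etale G G') (hG' : NoIsolated G') (hH : Surjective e.fH) :
    Surjective e.fA := by
  intro a
  rcases hG' a with ⟨h', rfl⟩ | ⟨h', hh'⟩
  · obtain ⟨h, rfl⟩ := hH h'
    exact ⟨G.s h, e.comm_s h⟩
  · obtain ⟨h, rfl⟩ := hH h'
    refine ⟨G.i (G.s h), ?_⟩
    rw [e.comm_i, e.comm_s, hh', G'.i_invol]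

variable {τ : BMGraph}

theorem fA_inl (e : Etale (toJK τ) G) (x : τ.F) : e.fA (Sum.inl x) = G.s (e.fH x) :=
  e.comm_s x

theorem fA_inr (e : Etale (toJK τ) G) (t : {f : τ.F // τ.j f = f}) :
    e.fA (Sum.inr t) = G.i (G.s (e.fH t.val)) := by
  rw [← G.i_invol (e.fA (Sum.inr t)), ← e.comm_i (Sum.inr t)]
  exact congrArg G.i (e.comm_s t.val)

theorem ext_toJK {e e' : Etale (toJK τ) G} (hH : e.fH = e'.fH) (hV : e.fV = e'.fV) :
    e = e' := by
  have hA : e.fA = e'.fA := by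
    funext a
    rcases a with x | t
    · rw [fA_inl, fA_inl, hH]
    · rw [fA_inr, fA_inr, hH]
  cases e; cases e'; cases hA; cases hH; cases hV; rfl

theorem isEComp_of_fH_fV (e₁ : Etale (toJK τ) G') (e₂ : Etale G' G'') (e : Etale (toJK τ) G'')
    (hH : ∀ x, e.fH x = e₂.fH (e₁.fH x)) (hV : ∀ v, e.fV v = e₂.fV (e₁.fV v)) :
    IsEComp e₁ e₂ e := by
  refine ⟨?_, hH, hV⟩
  rintro (x | t)
  · rw [fA_inl, fA_inl, e₂.comm_s, hH x]
  · rw [fA_inr, fA_inr, e₂.comm_i, e₂.comm_s, hH t.val]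

theorem fA_injective (e : Etale (toJK τ) G) (hH : Injective e.fH)
    (htail : ∀ t : {f : τ.F // τ.j f = f}, G.i (G.s (e.fH t.val)) ∉ Set.range G.s) :
    Injective e.fA := by
  have hsH : Injective (G.s ∘ e.fH) := G.s_inj.comp hH
  rintro (x₁ | t₁) (x₂ | t₂) heq <;> simp only [fA_inl, fA_inr] at heq
  · exact congrArg Sum.inl (hsH heq)
  · exact (htail t₂ ⟨_, heq⟩).elim
  · exact (htail t₁ ⟨_, heq.symm⟩).elim
  · have := congrArg G.i heq
    rw [G.i_invol, G.i_invol] at this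
    exact congrArg Sum.inr (Subtype.ext (hsH this))

def ofFlagEquiv (φ : τ.F ≃ G.H) (ψ : τ.V → G.V) (hψ : Injective ψ)
    (hp : ∀ x, G.p (φ x) = ψ (τ.bd x))
    (hj : ∀ x, τ.j x ≠ x → G.s (φ (τ.j x)) = G.i (G.s (φ x))) : Etale (toJK τ) G where
  fA := Sum.elim (fun x => G.s (φ x)) (fun t => G.i (G.s (φ t.val)))
  fH := φ
  fV := ψ
  comm_s _ := rfl
  comm_p x := (hp x).symm
  comm_i := by
    rintro (x | t)
    · by_cases hx : τ.j x = x
      · simp [toJK, hx]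
      · rw [toJK_i_inl_of_ne hx]
        exact hj x hx
    · exact (G.i_invol _).symm
  pullback h' v hv := by
    refine ⟨φ.symm h', ⟨hψ ?_, φ.apply_symm_apply h'⟩, fun h hh => ?_⟩
    · rw [← hv, ← φ.apply_symm_apply h', hp, φ.symm_apply_apply]
      rfl
    · exact (φ.symm_apply_eq.2 hh.2.symm).symm

theorem j_fH {σ : BMGraph} (e : Etale (toJK τ) (toJK σ)) {x : τ.F} (hx : τ.j x ≠ x) :
    σ.j (e.fH x) = e.fH (τ.j x) := by
  have := e.comm_i (Sum.inl x)
  rw [toJK_i_inl_of_ne hx, fA_inl, fA_inl] at this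
  exact (toJK_i_inl_eq_inl_iff.1 this.symm).1

end Etale

theorem IsReducedCover.fH_bijective {R X : JKGraph} {e : Etale R X} (he : IsReducedCover e) :
    Bijective e.fH :=
  ⟨e.fH_injective he.1.1, e.fH_surjective he.1.2⟩

namespace IsGrafting

variable {τ σ : BMGraph} {g : BMHom τ σ}

noncomputable def toEtale (hg : IsGrafting g) : Etale (toJK τ) (toJK σ) :=
  Etale.ofFlagEquiv hg.flagEquiv g.vertexMap hg.2.1 hg.bd_flagEquiv fun _ hx =>
    (toJK_i_inl_eq_inl_iff.2 ⟨hg.j_flagEquiv hx, hg.flagEquiv.injective.ne hx⟩).symm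

theorem isReducedCover_toEtale (hg : IsGrafting g) : IsReducedCover hg.toEtale :=
  ⟨hg.2, hg.toEtale.fA_surjective (noIsolated_toJK σ) hg.flagEquiv.surjective⟩

end IsGrafting

namespace IsReducedCover

variable {τ σ : BMGraph} {e : Etale (toJK τ) (toJK σ)}

noncomputable def toGrafting (he : IsReducedCover e) : BMHom τ σ :=
  BMHom.ofFlagEquiv (Equiv.ofBijective e.fH he.fH_bijective) e.fV he.1.2
    (fun x => (e.comm_p x).symm) fun _ => e.j_fH

theorem isGrafting_toGrafting (he : IsReducedCover e) : IsGrafting he.toGrafting :=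
  BMHom.isGrafting_ofFlagEquiv _ he.1 _ _

end IsReducedCover

noncomputable def graftingEquivReducedCover (τ σ : BMGraph) :
    {g : BMHom τ σ // IsGrafting g} ≃ {e : Etale (toJK τ) (toJK σ) // IsReducedCover e} where
  toFun g := ⟨g.2.toEtale, g.2.isReducedCover_toEtale⟩
  invFun e := ⟨e.2.toGrafting, e.2.isGrafting_toGrafting⟩
  left_inv := by
    rintro ⟨g, hg⟩
    refine Subtype.ext (IsGrafting.ext hg.isReducedCover_toEtale.isGrafting_toGrafting hg ?_ rfl)
    exact funext fun f => (Equiv.symm_apply_eq _).2 (hg.flagEquiv_flagMap f).symm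
  right_inv := by
    rintro ⟨e, he⟩
    refine Subtype.ext (Etale.ext_toJK (funext fun x => (Equiv.symm_apply_eq _).2 ?_) rfl)
    exact ((Equiv.ofBijective e.fH he.fH_bijective).symm_apply_apply x).symm

namespace JKGraph

variable (G : JKGraph)

/-- The half-edge on the other side of the edge through `h`, or `h` itself if that side is a
port. -/
noncomputable def opp (h : G.H) : G.H :=
  (partialInv G.s (G.i (G.s h))).getD h

variable {G}

theorem s_opp {h : G.H} (hh : G.i (G.s h) ∈ Set.range G.s) : G.s (G.opp h) = G.i (G.s h) := by
  obtain ⟨h', hh'⟩ := hh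
  rw [opp, ← hh', partialInv_left G.s_inj, Option.getD_some]

theorem opp_eq_self_iff {h : G.H} : G.opp h = h ↔ G.i (G.s h) ∉ Set.range G.s := by
  constructor
  · intro hopp hh
    exact G.i_nofix _ (hopp ▸ s_opp hh).symm
  · intro hh
    have : partialInv G.s (G.i (G.s h)) = none := by
      simpa [partialInv] using hh
    rw [opp, this, Option.getD_none]

theorem opp_opp (h : G.H) : G.opp (G.opp h) = h := by
  by_cases hh : G.i (G.s h) ∈ Set.range G.s
  · have hs := s_opp hh
    have hh' : G.i (G.s (G.opp h)) ∈ Set.range G.s := ⟨h, by rw [hs, G.i_invol]⟩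
    exact G.s_inj (by rw [s_opp hh', hs, G.i_invol])
  · rw [opp_eq_self_iff.2 hh, opp_eq_self_iff.2 hh]

end JKGraph

noncomputable def fromJK (G : JKGraph) : BMGraph where
  V := G.V
  F := G.H
  fintV := G.fintV
  fintF := G.fintH
  decF := G.decH
  bd := G.p
  j := G.opp
  j_invol := G.opp_opp

noncomputable def JKGraph.etaleFromJK (G : JKGraph) : Etale (toJK (fromJK G)) G :=
  Etale.ofFlagEquiv (Equiv.refl G.H) id injective_id (fun _ => rfl) fun _ hx =>
    JKGraph.s_opp (not_not.1 (mt JKGraph.opp_eq_self_iff.2 hx))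

theorem JKGraph.bijective_etaleFromJK_fA (G : JKGraph) (hG : NoIsolated G) :
    Bijective G.etaleFromJK.fA :=
  ⟨G.etaleFromJK.fA_injective injective_id fun t => JKGraph.opp_eq_self_iff.1 t.2,
    G.etaleFromJK.fA_surjective hG surjective_id⟩

/-- There is an equivalence `Φ₁` between the wide subcategory
of the BM category with only graftings, and the category of JK graphs without
isolated edges and reduced covers: on objects it is given by `toJK`, on
morphisms it is a bijection between graftings `τ → σ` and reduced covers
`toJK τ → toJK σ`, compatible with composition; moreover `toJK` lands in
graphs without isolated edges and is essentially surjective onto them. -/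
theorem BM_graftings_equiv_reduced_covers :
    ∃ Φ : ∀ τ σ : BMGraph,
      {g : BMHom τ σ // IsGrafting g} ≃ {e : Etale (toJK τ) (toJK σ) // IsReducedCover e},
      (∀ τ : BMGraph, NoIsolated (toJK τ)) ∧
      (∀ (τ σ ρ : BMGraph) (g : {g : BMHom τ σ // IsGrafting g})
         (g' : {g : BMHom σ ρ // IsGrafting g}) (k : BMHom τ ρ) (hk : IsGrafting k),
        IsCompositeOf k g.val g'.val →
        IsEComp (Φ τ σ g).val (Φ σ ρ g').val (Φ τ ρ ⟨k, hk⟩).val) ∧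
      (∀ G : JKGraph, NoIsolated G → ∃ τ : BMGraph,
        ∃ e : Etale (toJK τ) G, Function.Bijective e.fA ∧ Function.Bijective e.fH ∧
          Function.Bijective e.fV) := by
  refine ⟨graftingEquivReducedCover, noIsolated_toJK, ?_, ?_⟩
  · rintro τ σ ρ ⟨g, hg⟩ ⟨g', hg'⟩ k hk ⟨hF, hV, -, -⟩
    exact Etale.isEComp_of_fH_fV _ _ _ (IsGrafting.flagEquiv_comp hg hg' hk hF) hV
  · intro G hG
    exact ⟨fromJK G, G.etaleFromJK, G.bijective_etaleFromJK_fA hG, bijective_id, bijective_id⟩
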